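/- Let k ≥ 4 be even, ρ ∈ ℕ, and 3(k-1) ≤ n' ≤ (k-1)^ρ - (k²/2 - 3k + 2). Then the C_k-bootstrap process on the path P_{n'} reaches the complete bipartite graph between the even-labelled and odd-labelled vertices (i.e. K_{⌊n'/2⌋,⌈n'/2⌉}) within ρ steps, and this graph is C_k-stable. -/

import Mathlib

/-- One step of the `C_k`-bootstrap process: add every edge whose endpoints are
joined by a path of length `k-1` in the current graph. -/
def cycleStep (k : ℕ) {V : Type*} (G : SimpleGraph V) : SimpleGraph V where
  Adj u v := G.Adj u v ∨ (u ≠ v ∧ ∃ p : G.Walk u v, p.IsPath ∧ p.length = k - 1)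
  symm := by
    refine ⟨?_⟩
    intro u v h
    rcases h with h | ⟨hne, p, hp, hl⟩
    · exact Or.inl h.symm
    · exact Or.inr ⟨hne.symm, p.reverse, hp.reverse, by simpa using hl⟩
  loopless := by
    refine ⟨?_⟩
    intro v h
    rcases h with h | ⟨hne, _⟩
    · exact G.irrefl h
    · exact hne rfl

/-- The `C_k`-bootstrap process on `G`. -/
def cycleProcess (k : ℕ) {V : Type*} (G : SimpleGraph V) : ℕ → SimpleGraph V
  | 0 => G
  | (i + 1) => cycleStep k (cycleProcess k G i)

namespace CB
open SimpleGraph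

/-- numeric adjacency in the process graph -/
def adjN (k n' t a b : ℕ) : Prop :=
  ∃ (ha : a < n') (hb : b < n'),
    (cycleProcess k (SimpleGraph.pathGraph n') t).Adj ⟨a, ha⟩ ⟨b, hb⟩

lemma adjN.symm {k n' t a b : ℕ} (h : adjN k n' t a b) : adjN k n' t b a := by
  obtain ⟨ha, hb, h⟩ := h; exact ⟨hb, ha, h.symm⟩

lemma adjN_mono {k n' t a b : ℕ} (h : adjN k n' t a b) : adjN k n' (t+1) a b := by
  obtain ⟨ha, hb, h⟩ := h; exact ⟨ha, hb, Or.inl h⟩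

lemma adjN0 {k n' a : ℕ} (h : a + 1 < n') : adjN k n' 0 a (a+1) := by
  refine ⟨by omega, h, ?_⟩
  show (SimpleGraph.pathGraph n').Adj _ _
  rw [SimpleGraph.pathGraph_adj]
  left; rfl

/-- build a walk from a function on an initial segment -/
lemma walk_of_fn {V : Type*} (G : SimpleGraph V) (f : ℕ → V) :
    ∀ L, (∀ i < L, G.Adj (f i) (f (i+1))) →
      ∃ w : G.Walk (f 0) (f L), w.length = L ∧ w.support = (List.range (L+1)).map f := by
  intro L
  induction L with
  | zero => intro _; exact ⟨SimpleGraph.Walk.nil, by simp, by simp [List.range_succ]⟩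
  | succ L ih =>
    intro h
    obtain ⟨w, hlen, hsup⟩ := ih (fun i hi => h i (by omega))
    refine ⟨w.concat (h L (by omega)), by simp [hlen], ?_⟩
    rw [SimpleGraph.Walk.support_concat, hsup, List.range_succ (n := L+1), List.map_append]
    simp [List.concat_eq_append]

/-- master builder: an injective k-1-step chain in level t gives adjacency at level t+1 -/
lemma adjN_build {k n' t : ℕ} (hk : 4 ≤ k) (f : ℕ → ℕ)
    (hb : ∀ i ≤ k - 1, f i < n')
    (hinj : ∀ i ≤ k-1, ∀ j ≤ k-1, f i = f j → i = j)
    (hch : ∀ i < k-1, adjN k n' t (f i) (f (i+1))) :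
    adjN k n' (t+1) (f 0) (f (k-1)) := by
  set m := k - 1 with hm
  have hmk : m = k - 1 := rfl
  -- function into Fin n'
  have hbnd : ∀ i, f (min i m) < n' := fun i => hb _ (Nat.min_le_right _ _)
  set F : ℕ → Fin n' := fun i => ⟨f (min i m), hbnd i⟩ with hF
  have hFeq : ∀ i ≤ m, (F i : ℕ) = f i := by
    intro i hi; simp [hF, Nat.min_eq_left hi]
  have hch' : ∀ i < m, (cycleProcess k (SimpleGraph.pathGraph n') t).Adj (F i) (F (i+1)) := by
    intro i hi
    obtain ⟨ha, hb', h⟩ := hch i hi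
    have e1 : F i = ⟨f i, ha⟩ := by ext; simp [hF, Nat.min_eq_left (by omega : i ≤ m)]
    have e2 : F (i+1) = ⟨f (i+1), hb'⟩ := by ext; simp [hF, Nat.min_eq_left (by omega : i+1 ≤ m)]
    rw [e1, e2]; exact h
  obtain ⟨w, hlen, hsup⟩ := walk_of_fn _ F m hch'
  have hnd : w.support.Nodup := by
    rw [hsup]
    refine List.Nodup.map_on ?_ List.nodup_range
    intro i hi j hj hij
    simp only [List.mem_range] at hi hj
    have := hinj i (by omega) j (by omega) (by
      have := congrArg Fin.val hij
      rwa [hFeq i (by omega), hFeq j (by omega)] at this)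
    exact this
  have hne : F 0 ≠ F m := by
    intro hc
    have : (0:ℕ) = m := hinj 0 (by omega) m le_rfl (by
      have := congrArg Fin.val hc
      rwa [hFeq 0 (by omega), hFeq m le_rfl] at this)
    omega
  refine ⟨hb 0 (by omega), hb m le_rfl, ?_⟩
  show (cycleStep k (cycleProcess k (SimpleGraph.pathGraph n') t)).Adj _ _
  have e0 : F 0 = ⟨f 0, hb 0 (by omega)⟩ := by ext; simp [hF]
  have em : F m = ⟨f m, hb m le_rfl⟩ := by ext; simp [hF]
  rw [← e0, ← em]
  exact Or.inr ⟨hne, w, (SimpleGraph.Walk.isPath_def w).mpr hnd, by omega⟩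


/-! ### arithmetic -/

/-- every `y ≥ w(w-1)` is representable over `{w, w+1}` -/
lemma frob {w : ℕ} (hw : 1 ≤ w) (y : ℕ) (hy : w*(w-1) ≤ y) :
    ∃ α β, y = α*w + β*(w+1) := by
  have hdm := Nat.div_add_mod y w
  have hBw : y % w < w := Nat.mod_lt _ (by omega)
  have hDge : w - 1 ≤ y / w := by
    rw [Nat.le_div_iff_mul_le (by omega)]
    calc (w-1)*w = w*(w-1) := by ring
    _ ≤ y := hy
  refine ⟨y/w - y%w, y%w, ?_⟩
  have e1 : (y/w - y%w)*w = (y/w)*w - (y%w)*w := Nat.sub_mul _ _ _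
  have e2 : (y%w)*(w+1) = (y%w)*w + y%w := by ring
  have e3 : (y%w)*w ≤ (y/w)*w := Nat.mul_le_mul_right _ (by omega)
  have e4 : w*(y/w) = (y/w)*w := by ring
  omega

/-- normalization: any rep can be rewritten with `β ≤ k - 3` -/
lemma rep_norm {k : ℕ} (hk : 4 ≤ k) (d P : ℕ) :
    ∀ β α, d + α*(k-2) + β*k = P → ∃ α' β', β' ≤ k - 3 ∧ d + α'*(k-2) + β'*k = P := by
  intro β
  induction β using Nat.strong_induction_on with
  | _ β ih =>
    intro α h
    by_cases hβ : β ≤ k - 3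
    · exact ⟨α, β, hβ, h⟩
    · refine ih (β - (k-2)) (by omega) (α + k) ?_
      have e1 : (α + k)*(k-2) = α*(k-2) + k*(k-2) := by ring
      have e2 : (β - (k-2))*k = β*k - (k-2)*k := Nat.sub_mul _ _ _
      have e3 : (k-2)*k ≤ β*k := Nat.mul_le_mul_right _ (by omega)
      have e4 : k*(k-2) = (k-2)*k := by ring
      omega

/-- `(k-1)^t = 1 + α (k-2)` -/
lemma rep_pow {k : ℕ} (hk : 4 ≤ k) : ∀ t : ℕ, ∃ α, 1 + α*(k-2) = (k-1)^t := by
  obtain ⟨e, he⟩ : ∃ e, k = e + 2 := ⟨k - 2, by omega⟩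
  subst he
  have h2 : e + 2 - 2 = e := by omega
  have h1 : e + 2 - 1 = e + 1 := by omega
  rw [h2, h1]
  intro t
  induction t with
  | zero => exact ⟨0, by simp⟩
  | succ t ih =>
    obtain ⟨α, hα⟩ := ih
    exact ⟨1 + α*(e+1), by rw [pow_succ, ← hα]; ring⟩

lemma odd_pow_k {k : ℕ} (hk : 4 ≤ k) (hke : Even k) (t : ℕ) : Odd ((k-1)^t) := by
  refine Odd.pow ?_
  obtain ⟨c, hc⟩ := hke
  exact ⟨c - 1, by omega⟩

/-! ### step predicates -/

def StepRep (k t s : ℕ) : Prop := 1 ≤ s ∧ ∃ α β, s + α*(k-2) + β*k = (k-1)^t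

def Claim (k n' t : ℕ) : Prop :=
  ∀ a d, a + d < n' → StepRep k t d → adjN k n' t a (a+d)

lemma stepRep_one {k : ℕ} (hk : 4 ≤ k) (t : ℕ) : StepRep k t 1 := by
  obtain ⟨α, hα⟩ := rep_pow hk t
  exact ⟨le_rfl, α, 0, by omega⟩

lemma stepRep_odd {k t s : ℕ} (hk : 4 ≤ k) (hke : Even k) (h : StepRep k t s) : Odd s := by
  obtain ⟨-, α, β, h⟩ := h
  obtain ⟨j, hj⟩ := odd_pow_k hk hke t
  obtain ⟨c, hc⟩ := hke
  have e1 : α*(k-2) = 2*(α*(c-1)) := by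
    have h2 : k - 2 = 2*(c-1) := by omega
    rw [h2]; ring
  have e2 : β*k = 2*(β*c) := by rw [hc]; ring
  exact ⟨(j - (α*(c-1) + β*c)), by omega⟩

lemma claim_step {k n' t : ℕ} (H : Claim k n' t) {a b : ℕ} (hab : a < b) (hb : b < n')
    (hs : StepRep k t (b - a)) : adjN k n' t a b := by
  have h := H a (b - a) (by omega) hs
  have hba : a + (b - a) = b := by omega
  rwa [hba] at h

/-! ### base claims -/

lemma claim0 {k n' : ℕ} (hk : 4 ≤ k) : Claim k n' 0 := by
  intro a d hd hs
  obtain ⟨hd1, α, β, h⟩ := hs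
  rw [pow_zero] at h
  have hd2 : d = 1 := by
    rcases Nat.eq_zero_or_pos (α*(k-2)) with h1 | h1
    · rcases Nat.eq_zero_or_pos (β*k) with h2 | h2 <;> omega
    · omega
  rw [hd2] at hd ⊢
  exact adjN0 hd

/-! ### mirror symmetry -/

lemma adj_mirror {k n' : ℕ} : ∀ (t : ℕ) (x y : Fin n'),
    (cycleProcess k (SimpleGraph.pathGraph n') t).Adj x y →
    (cycleProcess k (SimpleGraph.pathGraph n') t).Adj x.rev y.rev := by
  intro t
  induction t with
  | zero =>
    intro x y h
    have h' := (SimpleGraph.pathGraph_adj).mp h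
    have hx := x.isLt
    have hy := y.isLt
    refine (SimpleGraph.pathGraph_adj).mpr ?_
    rw [Fin.val_rev, Fin.val_rev]
    omega
  | succ t ih =>
    intro x y h
    rcases h with h | ⟨hne, p, hp, hl⟩
    · exact Or.inl (ih x y h)
    · refine Or.inr ⟨fun hc => hne (Fin.rev_injective hc), ?_⟩
      let ψ : (cycleProcess k (SimpleGraph.pathGraph n') t) →g
          (cycleProcess k (SimpleGraph.pathGraph n') t) := ⟨Fin.rev, fun hadj => ih _ _ hadj⟩
      refine ⟨p.map ψ, ?_, by simp [hl]⟩
      exact SimpleGraph.Walk.map_isPath_of_injective (Fin.rev_injective) hp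

lemma adjN_mirror {k n' t a b : ℕ} (h : adjN k n' t a b) :
    adjN k n' t (n' - 1 - a) (n' - 1 - b) := by
  obtain ⟨ha, hb, h⟩ := h
  refine ⟨by omega, by omega, ?_⟩
  have := adj_mirror t _ _ h
  have e1 : (⟨a, ha⟩ : Fin n').rev = ⟨n' - 1 - a, by omega⟩ := by
    ext; simp [Fin.val_rev]; omega
  have e2 : (⟨b, hb⟩ : Fin n').rev = ⟨n' - 1 - b, by omega⟩ := by
    ext; simp [Fin.val_rev]; omega
  rwa [e1, e2] at this

/-! ### parity -/

lemma parity_walk {n' : ℕ} (G : SimpleGraph (Fin n'))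
    (hpar : ∀ x y : Fin n', G.Adj x y → ¬ ((x:ℕ) % 2 = (y:ℕ) % 2)) :
    ∀ {x y : Fin n'} (p : G.Walk x y), ((x:ℕ) + p.length) % 2 = (y:ℕ) % 2 := by
  intro x y p
  induction p with
  | nil => simp
  | cons h q ih =>
    have := hpar _ _ h
    rw [SimpleGraph.Walk.length_cons]
    omega

lemma parity_adj {k n' : ℕ} (hk : 4 ≤ k) (hke : Even k) : ∀ (t : ℕ) (x y : Fin n'),
    (cycleProcess k (SimpleGraph.pathGraph n') t).Adj x y → ¬ ((x:ℕ) % 2 = (y:ℕ) % 2) := by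
  intro t
  induction t with
  | zero =>
    intro x y h
    have h' := (SimpleGraph.pathGraph_adj).mp h
    omega
  | succ t ih =>
    intro x y h
    rcases h with h | ⟨hne, p, hp, hl⟩
    · exact ih x y h
    · have := parity_walk _ ih p
      rw [hl] at this
      obtain ⟨c, hc⟩ := hke
      omega

/-! ### level 1 -/

lemma claim01 {k n' : ℕ} (hk : 4 ≤ k) : Claim k n' 1 := by
  intro a d hd hs
  obtain ⟨hd1, α, β, h⟩ := hs
  rw [pow_one] at h
  have hβ : β = 0 := by
    rcases Nat.eq_zero_or_pos β with h0 | h0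
    · exact h0
    · have : k ≤ β*k := Nat.le_mul_of_pos_left k h0
      omega
  subst hβ
  rcases Nat.lt_or_ge α 2 with hα | hα
  · interval_cases α
    · -- d = k - 1 : increasing ones path
      have hd2 : d = k - 1 := by omega
      subst hd2
      have h0 : adjN k n' 1 a (a + (k-1)) := adjN_build (t := 0) (n' := n') hk (fun i => a + i)
        (fun i hi => by omega)
        (fun i hi j hj hij => by omega)
        (fun i hi => by
          rw [show a+(i+1) = (a+i)+1 by omega]
          exact adjN0 (by omega))
      simpa using h0
    · -- d = 1
      have hd2 : d = 1 := by omega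
      subst hd2
      exact adjN_mono (adjN0 (by omega))
  · exfalso
    have : 2*(k-2) ≤ α*(k-2) := Nat.mul_le_mul_right _ hα
    omega

/-! ### frobenius step availability -/

lemma stepRep_frob {k t s : ℕ} (hk : 4 ≤ k) (hke : Even k) (hs1 : 1 ≤ s) (hsodd : Odd s)
    (hbig : s + 2*((k/2 - 1)*(k/2 - 2)) ≤ (k-1)^t) : StepRep k t s := by
  obtain ⟨c, hc⟩ := hke
  have hkc : k = 2*c := by omega
  have hc2 : 2 ≤ c := by omega
  have hdiv : k/2 = c := by omega
  set w := c - 1 with hw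
  have hw1 : 1 ≤ w := by omega
  set P := (k-1)^t with hP
  have hPodd : Odd P := odd_pow_k hk (⟨c, hc⟩) t
  obtain ⟨j, hj⟩ := hPodd
  obtain ⟨i, hi⟩ := hsodd
  have hbig' : s + 2*(w*(w-1)) ≤ P := by
    have : k/2 - 1 = w := by omega
    have h2 : k/2 - 2 = w - 1 := by omega
    rwa [this, h2] at hbig
  -- y = (P - s)/2
  have hyex : ∃ y, P = s + 2*y := ⟨j - i, by omega⟩
  obtain ⟨y, hy⟩ := hyex
  have hyge : w*(w-1) ≤ y := by omega
  obtain ⟨α, β, hrep⟩ := frob hw1 y hyge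
  refine ⟨hs1, α, β, ?_⟩
  have e1 : α*(k-2) = 2*(α*w) := by
    have : k - 2 = 2*w := by omega
    rw [this]; ring
  have e2 : β*k = 2*(β*(w+1)) := by
    have : k = 2*(w+1) := by omega
    rw [this]; ring
  omega

lemma stepRep_small {k t s : ℕ} (hk : 4 ≤ k) (hke : Even k) (ht : 2 ≤ t)
    (hs1 : 1 ≤ s) (hsodd : Odd s) (hsle : s ≤ 2*k - 5) : StepRep k t s := by
  refine stepRep_frob hk hke hs1 hsodd ?_
  have hp2 : (k-1)^2 ≤ (k-1)^t := Nat.pow_le_pow_right (by omega) ht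
  obtain ⟨c, hc⟩ := hke
  have hdiv : k/2 = c := by omega
  rw [hdiv]
  have e1 : (k-1)^2 = 4*((c-1)*(c-1)) + 4*(c-1) + 1 := by
    have : k - 1 = 2*(c-1) + 1 := by omega
    rw [this]; ring
  have e2 : (c-1)*(c-2) ≤ (c-1)*(c-1) := Nat.mul_le_mul_left _ (by omega)
  omega

/-! ### increasing paths from step lists -/

lemma sum_take_mono {s : List ℕ} (hs : ∀ x ∈ s, 1 ≤ x) :
    ∀ j, j ≤ s.length → ∀ i, i < j → (s.take i).sum < (s.take j).sum := by
  intro j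
  induction j with
  | zero => intro _ i hi; omega
  | succ j ih =>
    intro hj i hi
    have hlt : j < s.length := by omega
    have hmem : s[j] ∈ s := List.getElem_mem _
    have hs1 : 1 ≤ s[j] := hs _ hmem
    have e := List.sum_take_succ s j hlt
    rcases Nat.lt_or_ge i j with h | h
    · have := ih (by omega) i h
      omega
    · have : i = j := by omega
      subst this
      omega

lemma claim_inc {k n' t : ℕ} (hk : 4 ≤ k) (H : Claim k n' t) (s : List ℕ)
    (hlen : s.length = k - 1) (hstep : ∀ x ∈ s, StepRep k t x)
    (a : ℕ) (hbnd : a + s.sum < n') : adjN k n' (t+1) a (a + s.sum) := by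
  have hpos : ∀ x ∈ s, 1 ≤ x := fun x hx => (hstep x hx).1
  have hfin : (s.take (k-1)).sum = s.sum := by
    rw [← hlen, List.take_length]
  have hmono : ∀ j, j ≤ k - 1 → ∀ i, i < j → (s.take i).sum < (s.take j).sum := by
    rw [← hlen]; exact sum_take_mono hpos
  have hub : ∀ i, i ≤ k - 1 → (s.take i).sum ≤ s.sum := by
    intro i hi
    rcases Nat.lt_or_ge i (k-1) with h | h
    · have := hmono (k-1) le_rfl i h; omega
    · have : i = k - 1 := by omega
      subst this; omega
  have h0 : adjN k n' (t+1) (a + (s.take 0).sum) (a + (s.take (k-1)).sum) := by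
    apply adjN_build (n' := n') hk (fun i => a + (s.take i).sum)
    · intro i hi
      have := hub i hi; omega
    · intro i hi j hj hij
      rcases Nat.lt_trichotomy i j with h | h | h
      · have := hmono j hj i h; omega
      · exact h
      · have := hmono i hi j h; omega
    · intro i hi
      have hlt : i < s.length := by omega
      have e := List.sum_take_succ s i hlt
      have hmem : s[i] ∈ s := List.getElem_mem _
      have hrep := hstep _ hmem
      have h1le : 1 ≤ s[i] := hrep.1
      have hiub := hub (i+1) (by omega)
      have hub2 : a + (s.take (i+1)).sum < n' := by omega
      apply claim_step H (by omega : a + (s.take i).sum < a + (s.take (i+1)).sum) hub2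
      have e2 : a + (s.take (i+1)).sum - (a + (s.take i).sum) = s[i] := by omega
      rwa [e2]
  simpa [hfin] using h0

/-! ### slice sums -/

lemma min_slices_sum (C : ℕ) : ∀ K, ∀ X, ((List.range K).map (fun i => min C (X - i*C))).sum = min X (K*C) := by
  intro K
  induction K with
  | zero => intro X; simp
  | succ K ih =>
    intro X
    rw [List.range_succ, List.map_append, List.sum_append]
    have e : (K+1)*C = K*C + C := by ring
    have := ih X
    simp only [List.map_cons, List.map_nil, List.sum_cons, List.sum_nil]
    omega

lemma sum_sub_map (S : ℕ) (g : ℕ → ℕ) : ∀ K, (∀ i, i < K → g i ≤ S) →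
    ((List.range K).map (fun i => S - g i)).sum + ((List.range K).map g).sum = K*S ∧
    ((List.range K).map g).sum ≤ K*S := by
  intro K
  induction K with
  | zero => intro _; simp
  | succ K ih =>
    intro h
    obtain ⟨e1, e2⟩ := ih (fun i hi => h i (by omega))
    have e3 := h K (by omega)
    have e : (K+1)*S = K*S + S := by ring
    rw [List.range_succ, List.map_append, List.sum_append, List.map_append, List.sum_append]
    simp only [List.map_cons, List.map_nil, List.sum_cons, List.sum_nil]
    omega

/-! ### pattern B : ascend by 1s, jump J, descend by 1s -/

lemma claim_B {k n' t : ℕ} (hk : 4 ≤ k) (H : Claim k n' t) (a α β J : ℕ)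
    (hαβ : α + β + 2 = k) (hJ : StepRep k t J) (hJβ : β < J)
    (hroom : a + α + J < n') :
    adjN k n' (t+1) a (a + α + J - β) := by
  have h1 := stepRep_one hk t
  set f : ℕ → ℕ := fun i => if i ≤ α then a + i else a + α + J - (i - (α+1)) with hf
  have hJ1 : 1 ≤ J := hJ.1
  have hmain := adjN_build (n' := n') (t := t) hk f ?hb ?hinj ?hch
  case hb =>
    intro i hi
    simp only [hf]
    split_ifs <;> omega
  case hinj =>
    intro i hi j hj hij
    simp only [hf] at hij
    split_ifs at hij <;> omega
  case hch =>
    intro i hi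
    rcases Nat.lt_trichotomy i α with h | h | h
    · have e1 : f i = a + i := by simp only [hf, if_pos h.le]
      have e2 : f (i+1) = a + (i+1) := by simp only [hf, if_pos (by omega : i+1 ≤ α)]
      rw [e1, e2]
      apply claim_step H (by omega) (by omega)
      rw [show a + (i+1) - (a+i) = 1 by omega]
      exact h1
    · subst h
      have e1 : f i = a + i := by simp only [hf, if_pos le_rfl]
      have e2 : f (i+1) = a + i + J := by
        simp only [hf, if_neg (by omega : ¬ (i+1 ≤ i))]; omega
      rw [e1, e2]
      apply claim_step H (by omega) (by omega)
      rw [show a + i + J - (a+i) = J by omega]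
      exact hJ
    · have hik : i ≤ k - 2 := by omega
      have e1 : f i = a + α + J - (i - (α+1)) := by
        simp only [hf, if_neg (by omega : ¬ (i ≤ α))]
      have e2 : f (i+1) = a + α + J - (i - α) := by
        simp only [hf, if_neg (by omega : ¬ (i+1 ≤ α))]; omega
      rw [e1, e2]
      refine (claim_step H (by omega) (by omega) ?_).symm
      rw [show a + α + J - (i - (α+1)) - (a + α + J - (i - α)) = 1 by omega]
      exact h1
  have hf0 : f 0 = a := by simp [hf]
  have hfl : f (k-1) = a + α + J - β := by
    simp only [hf, if_neg (by omega : ¬ (k-1 ≤ α))]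
    omega
  rwa [hf0, hfl] at hmain

/-! ### pattern D : jump S=k-1, ascend by 1s, drop back S, descend by 1s -/

lemma claim_D {k n' t : ℕ} (hk : 4 ≤ k) (H : Claim k n' t) (a α β : ℕ)
    (hαβ : α + β + 1 = k) (hβ1 : 1 ≤ β) (hd : β < α)
    (hS : StepRep k t (k-1))
    (hroom : a + (k-1) + α - 1 < n') :
    adjN k n' (t+1) a (a + α - β) := by
  have h1 := stepRep_one hk t
  set f : ℕ → ℕ := fun i =>
    if i = 0 then a else if i ≤ α then a + (k-1) + (i-1) else a + α - 1 - (i - (α+1)) with hf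
  have hmain := adjN_build (n' := n') (t := t) hk f ?hb ?hinj ?hch
  case hb =>
    intro i hi
    simp only [hf]
    split_ifs <;> omega
  case hinj =>
    intro i hi j hj hij
    simp only [hf] at hij
    split_ifs at hij <;> omega
  case hch =>
    intro i hi
    rcases Nat.eq_or_lt_of_le (Nat.zero_le i) with h0 | h0
    · have e1 : f i = a := by simp only [hf, ← h0, if_pos rfl]
      have e2 : f (i+1) = a + (k-1) := by
        simp only [hf, if_neg (by omega : ¬ (i+1 = 0)), if_pos (by omega : i+1 ≤ α)]
        omega
      rw [e1, e2]
      apply claim_step H (by omega) (by omega)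
      rw [show a + (k-1) - a = k-1 by omega]
      exact hS
    · rcases Nat.lt_trichotomy i α with h | h | h
      · have e1 : f i = a + (k-1) + (i-1) := by
          simp only [hf, if_neg (by omega : ¬ (i = 0)), if_pos h.le]
        have e2 : f (i+1) = a + (k-1) + i := by
          simp only [hf, if_neg (by omega : ¬ (i+1 = 0)), if_pos (by omega : i+1 ≤ α)]
          omega
        rw [e1, e2]
        apply claim_step H (by omega) (by omega)
        rw [show a + (k-1) + i - (a + (k-1) + (i-1)) = 1 by omega]
        exact h1
      · subst h
        have e1 : f i = a + (k-1) + (i-1) := by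
          simp only [hf, if_neg (by omega : ¬ (i = 0)), if_pos le_rfl]
        have e2 : f (i+1) = a + i - 1 := by
          simp only [hf, if_neg (by omega : ¬ (i+1 = 0)), if_neg (by omega : ¬ (i+1 ≤ i))]
          omega
        rw [e1, e2]
        refine (claim_step H (by omega) (by omega) ?_).symm
        rw [show a + (k-1) + (i-1) - (a + i - 1) = k - 1 by omega]
        exact hS
      · have e1 : f i = a + α - 1 - (i - (α+1)) := by
          simp only [hf, if_neg (by omega : ¬ (i = 0)), if_neg (by omega : ¬ (i ≤ α))]
        have e2 : f (i+1) = a + α - 1 - (i - α) := by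
          simp only [hf, if_neg (by omega : ¬ (i+1 = 0)), if_neg (by omega : ¬ (i+1 ≤ α))]
          omega
        rw [e1, e2]
        refine (claim_step H (by omega) (by omega) ?_).symm
        rw [show a + α - 1 - (i - (α+1)) - (a + α - 1 - (i - α)) = 1 by omega]
        exact h1
  have hf0 : f 0 = a := by simp [hf]
  have hfl : f (k-1) = a + α - β := by
    simp only [hf, if_neg (by omega : ¬ (k-1 = 0)), if_neg (by omega : ¬ (k-1 ≤ α))]
    omega
  rwa [hf0, hfl] at hmain

/-! ### pattern C : sawtooth — ascend 1s, jump S, descend β by 1s, then b-1 jumps of S -/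

lemma claim_C {k n' t : ℕ} (hk : 4 ≤ k) (H : Claim k n' t) (a α β b S : ℕ)
    (hsum : α + β + b = k - 1) (hb2 : 2 ≤ b) (hβS : β + 2 ≤ S)
    (hS : StepRep k t S)
    (hroom : a + α + S - β + (b-1)*S < n') :
    adjN k n' (t+1) a (a + α + S - β + (b-1)*S) := by
  have h1 := stepRep_one hk t
  have hgm : ∀ j1 j2 : ℕ, j1 ≤ j2 → j1*S ≤ j2*S := fun _ _ h => Nat.mul_le_mul_right S h
  have hg : ∀ j1 j2 : ℕ, j1 < j2 → j1*S + S ≤ j2*S := by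
    intro j1 j2 h
    have h2 := Nat.mul_le_mul_right S (show j1+1 ≤ j2 by omega)
    rwa [Nat.succ_mul] at h2
  have hS2 : 2 ≤ S := by omega
  set f : ℕ → ℕ := fun i =>
    if i ≤ α then a + i
    else if i ≤ α+1+β then a + α + S - (i - (α+1))
    else a + α + S - β + (i - (α+1+β))*S with hf
  have hmain := adjN_build (n' := n') (t := t) hk f ?hb ?hinj ?hch
  case hb =>
    intro i hi
    have hub1 : S ≤ (b-1)*S := by
      have := hgm 1 (b-1) (by omega); omega
    simp only [hf]
    split_ifs with h1' h2'
    · omega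
    · omega
    · have := hgm (i - (α+1+β)) (b-1) (by omega)
      omega
  case hinj =>
    intro i hi j hj hij
    have hub1 : S ≤ (b-1)*S := by
      have := hgm 1 (b-1) (by omega); omega
    simp only [hf] at hij
    split_ifs at hij with p1 p2 p3 p4 p5 p6 p7 p8
    · omega
    · omega
    · -- i in zone1, j in zone4
      exfalso
      have := hgm 1 (j - (α+1+β)) (by omega)
      omega
    · omega
    · omega
    · exfalso
      have := hgm 1 (j - (α+1+β)) (by omega)
      omega
    · exfalso
      have := hgm 1 (i - (α+1+β)) (by omega)
      omega
    · exfalso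
      have := hgm 1 (i - (α+1+β)) (by omega)
      omega
    · -- both zone4
      rcases Nat.lt_trichotomy (i - (α+1+β)) (j - (α+1+β)) with h | h | h
      · have := hg _ _ h; omega
      · omega
      · have := hg _ _ h; omega
  case hch =>
    intro i hi
    have hub1 : S ≤ (b-1)*S := by
      have := hgm 1 (b-1) (by omega); omega
    have hub : ∀ j, j ≤ b-1 → a + α + S - β + j*S < n' := by
      intro j hj
      have := hgm j (b-1) hj
      omega
    rcases Nat.lt_trichotomy i α with h | h | h
    · have e1 : f i = a + i := by simp only [hf, if_pos h.le]
      have e2 : f (i+1) = a + (i+1) := by simp only [hf, if_pos (by omega : i+1 ≤ α)]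
      rw [e1, e2]
      apply claim_step H (by omega) (by omega)
      rw [show a + (i+1) - (a+i) = 1 by omega]
      exact h1
    · subst h
      have e1 : f i = a + i := by simp only [hf, if_pos le_rfl]
      have e2 : f (i+1) = a + i + S := by
        simp only [hf, if_neg (by omega : ¬ (i+1 ≤ i)), if_pos (by omega : i+1 ≤ i+1+β)]
        omega
      rw [e1, e2]
      have hbnd : a + i + S < n' := by
        have := hub 0 (by omega); omega
      apply claim_step H (by omega) hbnd
      rw [show a + i + S - (a+i) = S by omega]
      exact hS
    · rcases Nat.lt_trichotomy i (α+1+β) with h2 | h2 | h2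
      · -- descending by 1 inside zone2
        have e1 : f i = a + α + S - (i - (α+1)) := by
          simp only [hf, if_neg (by omega : ¬ (i ≤ α)), if_pos (by omega : i ≤ α+1+β)]
        have e2 : f (i+1) = a + α + S - (i - α) := by
          simp only [hf, if_neg (by omega : ¬ (i+1 ≤ α)), if_pos (by omega : i+1 ≤ α+1+β)]
          omega
        rw [e1, e2]
        refine (claim_step H (by omega) (by omega) ?_).symm
        rw [show a + α + S - (i - (α+1)) - (a + α + S - (i - α)) = 1 by omega]
        exact h1
      · -- bottom of descent: jump S
        have e1 : f i = a + α + S - β := by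
          simp only [hf, if_neg (by omega : ¬ (i ≤ α)), if_pos (by omega : i ≤ α+1+β)]
          omega
        have e2 : f (i+1) = a + α + S - β + S := by
          simp only [hf, if_neg (by omega : ¬ (i+1 ≤ α)), if_neg (by omega : ¬ (i+1 ≤ α+1+β))]
          rw [h2]
          rw [show α+1+β+1 - (α+1+β) = 1 by omega, one_mul]
        rw [e1, e2]
        have hbnd : a + α + S - β + S < n' := by
          have := hub 1 (by omega); omega
        apply claim_step H (by omega) hbnd
        rw [show a + α + S - β + S - (a + α + S - β) = S by omega]
        exact hS
      · -- zone4 : jump S each time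
        set j := i - (α+1+β) with hj
        have hj1 : 1 ≤ j := by omega
        have hjb : j + 1 ≤ b - 1 := by omega
        have e1 : f i = a + α + S - β + j*S := by
          simp only [hf, if_neg (by omega : ¬ (i ≤ α)), if_neg (by omega : ¬ (i ≤ α+1+β))]
          rw [← hj]
        have e2 : f (i+1) = a + α + S - β + (j+1)*S := by
          simp only [hf, if_neg (by omega : ¬ (i+1 ≤ α)), if_neg (by omega : ¬ (i+1 ≤ α+1+β))]
          rw [show i+1 - (α+1+β) = j+1 by omega]
        rw [e1, e2]
        have hstep : j*S + S = (j+1)*S := by rw [Nat.succ_mul]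
        have hbnd := hub (j+1) hjb
        apply claim_step H (by omega) (by omega)
        rw [show a + α + S - β + (j+1)*S - (a + α + S - β + j*S) = S by omega]
        exact hS
  have hf0 : f 0 = a := by simp [hf]
  have hfl : f (k-1) = a + α + S - β + (b-1)*S := by
    simp only [hf, if_neg (by omega : ¬ (k-1 ≤ α)), if_neg (by omega : ¬ (k-1 ≤ α+1+β))]
    rw [show k-1 - (α+1+β) = b-1 by omega]
  rwa [hf0, hfl] at hmain

/-! ### mirror helper -/

lemma adjN_flip {k n' t a d : ℕ} (hbound : a + d < n')
    (h : adjN k n' t (n' - 1 - (a+d)) (n' - 1 - (a+d) + d)) : adjN k n' t a (a+d) := by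
  have h2 := adjN_mirror h
  have e1 : n' - 1 - (n' - 1 - (a+d)) = a + d := by omega
  have e2 : n' - 1 - (n' - 1 - (a+d) + d) = a := by omega
  rw [e1, e2] at h2
  exact h2.symm

/-! ### level 2 -/

lemma claim12 {k n' : ℕ} (hk : 4 ≤ k) (hke : Even k) (hlb : 3*(k-1) ≤ n')
    (H : Claim k n' 1) : Claim k n' 2 := by
  intro a d hbound hs
  obtain ⟨hd1, α0, β0, h0⟩ := hs
  obtain ⟨α, β, hβle, h⟩ := rep_norm hk d _ β0 α0 h0
  rw [show (k-1)^2 = (k-1)*(k-1) from sq (k-1)] at h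
  have hSrep : StepRep k 1 (k-1) := ⟨by omega, 0, 0, by simp⟩
  have h1rep : StepRep k 1 1 := stepRep_one hk 1
  -- quadratic identities
  have q1 : (k-1)*(k-2) + (k-1) = (k-1)*(k-1) := by
    rw [← Nat.mul_succ]; congr 1; omega
  have q2 : k*(k-2) + k = k*(k-1) := by
    rw [← Nat.mul_succ]; congr 1; omega
  have q3 : (k-1)*(k-1) + (k-1) = k*(k-1) := by
    rw [← Nat.succ_mul]; congr 1; omega
  rcases Nat.lt_or_ge α (k-1) with hαlt | hαge
  case inr =>
    -- α ≥ k-1 forces d ∈ {1, k-1}, already present at level 1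
    have p1 : (k-1)*(k-2) ≤ α*(k-2) := Nat.mul_le_mul_right _ hαge
    have hβ0 : β = 0 := by
      rcases Nat.eq_zero_or_pos β with h0' | h0'
      · exact h0'
      · exfalso
        have : k ≤ β*k := Nat.le_mul_of_pos_left k h0'
        omega
    subst hβ0
    have hαub : α ≤ k := by
      by_contra hcon
      have : (k+1)*(k-2) ≤ α*(k-2) := Nat.mul_le_mul_right _ (by omega)
      have q4 : (k+1)*(k-2) = (k-1)*(k-2) + 2*(k-2) := by
        rw [show k+1 = (k-1)+2 by omega, Nat.add_mul]
      omega
    have hd' : StepRep k 1 d := by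
      rcases Nat.eq_or_lt_of_le hαge with he | hlt
      · -- α = k-1, d = k-1
        have hα : α = k - 1 := he.symm
        subst hα
        have : d = k - 1 := by omega
        refine ⟨by omega, 0, 0, by simp; omega⟩
      · -- α = k, d = 1
        have hα : α = k := by omega
        subst hα
        have : d = 1 := by omega
        refine ⟨by omega, 1, 0, by simp; omega⟩
    exact adjN_mono (H a d hbound hd')
  case inl =>
  -- α ≤ k - 2
  have hsum : α + β ≤ k - 1 := by
    by_contra hcon
    rcases Nat.eq_zero_or_pos β with hβ | hβ
    · omega
    · have p1 : k*(k-2) ≤ (α+β)*(k-2) := Nat.mul_le_mul_right _ (by omega)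
      have p2 : (α+β)*(k-2) = α*(k-2) + β*(k-2) := by ring
      have p3 : β*(k-2) + 2*β = β*k := by
        have h' : β*((k-2)+2) = β*(k-2) + β*2 := Nat.mul_add β (k-2) 2
        rw [show (k-2)+2 = k by omega] at h'
        omega
      have q6 : (k-1)*(k-2) + (k-2) = k*(k-2) := by
        rw [← Nat.succ_mul]; congr 1; omega
      omega
  set b := (k-1) - (α + β) with hb
  have eC : (α+β+b)*(k-1) = (k-1)*(k-1) := by rw [show α+β+b = k-1 by omega]
  have eC' : (α+β+b)*(k-1) = α*(k-1)+β*(k-1)+b*(k-1) := by ring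
  have eA : α*(k-2) + α = α*(k-1) := by rw [← Nat.mul_succ]; congr 1; omega
  have eB : β*(k-1) + β = β*k := by rw [← Nat.mul_succ]; congr 1; omega
  have hd_eq : d + β = α + b*(k-1) := by omega
  rcases Nat.eq_zero_or_pos β with hβ0 | hβpos
  · -- increasing path with b jumps of size k-1 then α ones
    subst hβ0
    set s : List ℕ := List.replicate b (k-1) ++ List.replicate α 1 with hs'
    have hlen : s.length = k - 1 := by
      simp [hs', List.length_replicate]; omega
    have hsum' : s.sum = d := by
      rw [hs', List.sum_append, List.sum_const_nat, List.sum_const_nat]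
      omega
    have hstep : ∀ x ∈ s, StepRep k 1 x := by
      intro x hx
      rw [hs', List.mem_append] at hx
      rcases hx with hx | hx
      · rw [List.eq_of_mem_replicate hx]; exact hSrep
      · rw [List.eq_of_mem_replicate hx]; exact h1rep
    have := claim_inc hk H s hlen hstep a (by omega)
    rwa [hsum'] at this
  · rcases Nat.lt_or_ge b 2 with hblt | hbge
    · rcases Nat.eq_zero_or_pos b with hb0 | hb1
      · -- b = 0 : pattern D
        rw [hb0, Nat.zero_mul] at hd_eq
        have hβα : β < α := by omega
        have hαβk : α + β + 1 = k := by omega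
        have hend : ∀ x : ℕ, x + α - β = x + d := by intro x; omega
        rcases Nat.lt_or_ge (a + (k-1) + α - 1) n' with hr | hr
        · have := claim_D hk H a α β hαβk hβpos hβα hSrep hr
          rwa [hend a] at this
        · apply adjN_flip hbound
          set a' := n' - 1 - (a + d) with ha'
          have hr' : a' + (k-1) + α - 1 < n' := by omega
          have := claim_D hk H a' α β hαβk hβpos hβα hSrep hr'
          rwa [hend a'] at this
      · -- b = 1 : pattern B with J = k-1
        have hb1' : b = 1 := by omega
        rw [hb1', Nat.one_mul] at hd_eq
        have hαβk : α + β + 2 = k := by omega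
        have hJβ : β < k - 1 := by omega
        have hend : ∀ x : ℕ, x + α + (k-1) - β = x + d := by intro x; omega
        rcases Nat.lt_or_ge (a + α + (k-1)) n' with hr | hr
        · have := claim_B hk H a α β (k-1) hαβk hSrep hJβ hr
          rwa [hend a] at this
        · apply adjN_flip hbound
          set a' := n' - 1 - (a + d) with ha'
          have hr' : a' + α + (k-1) < n' := by omega
          have := claim_B hk H a' α β (k-1) hαβk hSrep hJβ hr'
          rwa [hend a'] at this
    · -- b ≥ 2 : sawtooth, no extra room needed
      have hsm : (b-1)*(k-1) + (k-1) = b*(k-1) := by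
        rw [← Nat.succ_mul]; congr 1; omega
      have hend : a + α + (k-1) - β + (b-1)*(k-1) = a + d := by omega
      have hβS : β + 2 ≤ k - 1 := by omega
      have := claim_C hk H a α β b (k-1) (by omega) hbge hβS hSrep (by omega)
      rwa [hend] at this

/-! ### general step, t ≥ 2 -/

lemma claim_general {k n' t : ℕ} (hk : 4 ≤ k) (hke : Even k) (hlb : 3*(k-1) ≤ n')
    (ht : 2 ≤ t) (H : Claim k n' t) : Claim k n' (t+1) := by
  intro a d hbound hs
  obtain ⟨hd1, α0, β0, h0⟩ := hs
  have hdodd : Odd d := stepRep_odd hk hke ⟨hd1, α0, β0, h0⟩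
  obtain ⟨α, β, hβle, h⟩ := rep_norm hk d _ β0 α0 h0
  set P := (k-1)^t with hP
  have hpow : (k-1)^(t+1) = P*(k-1) := pow_succ _ _
  rw [hpow] at h
  have hP2 : (k-1)*(k-1) ≤ P := by
    have h' : (k-1)^2 ≤ (k-1)^t := Nat.pow_le_pow_right (by omega) ht
    rwa [sq] at h'
  obtain ⟨M, hM⟩ := rep_pow hk t
  rcases Nat.lt_or_ge d (k-1) with hsmall | hbig
  · -- small d : pattern B with α = 0, J = d + (k-2)
    obtain ⟨c, hc⟩ := id hke
    have hdk : d ≤ k - 3 := by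
      obtain ⟨x, hx⟩ := hdodd; omega
    have hJodd : Odd (d + (k-2)) := by
      obtain ⟨x, hx⟩ := hdodd; exact ⟨x + (c-1), by omega⟩
    have hJ : StepRep k t (d + (k-2)) := stepRep_small hk hke ht (by omega) hJodd (by omega)
    have hend : ∀ x : ℕ, x + 0 + (d + (k-2)) - (k-2) = x + d := by intro x; omega
    rcases Nat.lt_or_ge (a + 0 + (d + (k-2))) n' with hr | hr
    · have hB := claim_B hk H a 0 (k-2) (d + (k-2)) (by omega) hJ (by omega) hr
      rwa [hend a] at hB
    · apply adjN_flip hbound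
      set a' := n' - 1 - (a + d) with ha'
      have hr' : a' + 0 + (d + (k-2)) < n' := by omega
      have hB := claim_B hk H a' 0 (k-2) (d + (k-2)) (by omega) hJ (by omega) hr'
      rwa [hend a'] at hB
  · -- big d : increasing path via slicing
    set C := P - 1 with hC
    set r := α*(k-2) + β*k with hr
    have hCmul : C = M*(k-2) := by omega
    have hβC : β*k ≤ C := by
      have p1 : β*k ≤ (k-3)*k := Nat.mul_le_mul_right _ hβle
      have p2 : (k-3)*k + k = (k-2)*k := by rw [← Nat.succ_mul]; congr 1; omega
      have p3 : (k-2)*k + k = (k-1)*k := by rw [← Nat.succ_mul]; congr 1; omega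
      have p4 : (k-1)*(k-1) + (k-1) = (k-1)*k := by rw [← Nat.mul_succ]; congr 1; omega
      omega
    set q := (C - β*k)/(k-2) with hq
    set δ := min α q with hδ
    set X := (α - δ)*(k-2) with hX
    set bin := β*k + δ*(k-2) with hbin
    have hδα : δ ≤ α := Nat.min_le_left _ _
    have hqm : q*(k-2) ≤ C - β*k := Nat.div_mul_le_self _ _
    have hδm : δ*(k-2) ≤ q*(k-2) := Nat.mul_le_mul_right _ (Nat.min_le_right _ _)
    have hbinC : bin ≤ C := by omega
    have hf3 : bin + X = r := by
      have e1 : (α - δ)*(k-2) = α*(k-2) - δ*(k-2) := Nat.sub_mul _ _ _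
      have e2 : δ*(k-2) ≤ α*(k-2) := Nat.mul_le_mul_right _ hδα
      omega
    have hrd : r + d = P*(k-1) := by omega
    have hPk : P*(k-1) = P*(k-2) + P := by
      rw [show k-1 = (k-2)+1 by omega, Nat.mul_succ]
    have hcomm : P*(k-1) = (k-1)*P := Nat.mul_comm _ _
    have hCk : (k-1)*P = (k-1)*C + (k-1) := by
      rw [show P = C + 1 by omega, Nat.mul_add, Nat.mul_one]
    have hkC : (k-1)*C = (k-2)*C + C := by
      rw [show k-1 = (k-2)+1 by omega, Nat.add_mul, Nat.one_mul]
    have hcomm2 : C*(k-2) = (k-2)*C := Nat.mul_comm _ _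
    have hrC : r ≤ (k-1)*C := by omega
    have hXle : X ≤ C*(k-2) := by
      rcases Nat.le_total α q with hc' | hc'
      · have hz : X = 0 := by
          rw [hX, show δ = α from min_eq_left hc', Nat.sub_self, Nat.zero_mul]
        omega
      · have hδq : δ = q := min_eq_right hc'
        have hdm : (k-2)*q + (C - β*k) % (k-2) = C - β*k := by
          rw [hq]; exact Nat.div_add_mod (C - β*k) (k-2)
        have hmod : (C - β*k) % (k-2) < k-2 := Nat.mod_lt _ (by omega)
        have hδq2 : δ*(k-2) = q*(k-2) := by rw [hδq]
        by_contra hcon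
        have hge : C + 1 ≤ α - δ := by
          by_contra hcc
          exact hcon (Nat.mul_le_mul_right _ (by omega))
        have hXge : (C+1)*(k-2) ≤ X := by
          rw [hX]; exact Nat.mul_le_mul_right _ hge
        have hCP : (C+1)*(k-2) = C*(k-2) + (k-2) := by rw [Nat.succ_mul]
        have hqcomm : (k-2)*q = q*(k-2) := Nat.mul_comm _ _
        omega
    -- the step list
    set s : List ℕ := (P - bin) :: (List.range (k-2)).map (fun i => P - min C (X - i*C)) with hs'
    have hlen : s.length = k - 1 := by
      rw [hs', List.length_cons, List.length_map, List.length_range]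
      omega
    have hslice_le : ∀ i : ℕ, min C (X - i*C) ≤ C := fun i => Nat.min_le_left _ _
    have hslice_rep : ∀ i : ℕ, ∃ γ, min C (X - i*C) = γ*(k-2) := by
      intro i
      have e0 : i*C = (i*M)*(k-2) := by rw [hCmul, Nat.mul_assoc]
      have e1 : X - i*C = ((α - δ) - i*M)*(k-2) := by
        rw [hX, e0, ← Nat.sub_mul]
      rcases Nat.le_total C (X - i*C) with hc' | hc'
      · exact ⟨M, by rw [min_eq_left hc', hCmul]⟩
      · exact ⟨(α - δ) - i*M, by rw [min_eq_right hc', e1]⟩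
    have hstep : ∀ x ∈ s, StepRep k t x := by
      intro x hx
      rw [hs', List.mem_cons] at hx
      rcases hx with hx | hx
      · subst hx
        exact ⟨by omega, δ, β, by omega⟩
      · rw [List.mem_map] at hx
        obtain ⟨i, hi, hx⟩ := hx
        subst hx
        obtain ⟨γ, hγ⟩ := hslice_rep i
        have hle := hslice_le i
        exact ⟨by omega, γ, 0, by omega⟩
    have hgle : ∀ i, i < k-2 → min C (X - i*C) ≤ P := fun i _ => le_trans (hslice_le i) (by omega)
    obtain ⟨hsub, hgb⟩ := sum_sub_map P (fun i => min C (X - i*C)) (k-2) hgle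
    have hmin := min_slices_sum C (k-2) X
    have hminX : min X ((k-2)*C) = X := min_eq_left (by omega)
    have hcommP : (k-2)*P = P*(k-2) := Nat.mul_comm _ _
    have hsum' : s.sum = d := by
      rw [hs', List.sum_cons]
      omega
    have hfin := claim_inc hk H s hlen hstep a (by rw [hsum']; exact hbound)
    rwa [hsum'] at hfin

/-! ### master claim -/

lemma claim_all {k n' : ℕ} (hk : 4 ≤ k) (hke : Even k) (hlb : 3*(k-1) ≤ n') :
    ∀ t, Claim k n' t := by
  intro t
  induction t with
  | zero => exact claim0 hk
  | succ t ih =>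
    rcases t with _ | _ | t
    · exact claim01 hk
    · exact claim12 hk hke hlb ih
    · exact claim_general hk hke hlb (by omega) ih

end CB

/-- For even `k ≥ 4` with `3(k-1) ≤ n' ≤ (k-1)^ρ - (k²/2 - 3k + 2)`, the `C_k`-process on
`P_{n'}` reaches, within `ρ` steps, the complete bipartite graph between the even-labelled
and odd-labelled vertices, and this graph is `C_k`-stable. -/
theorem cycleProcess_path_completeBipartite (k n' ρ : ℕ) (hk : 4 ≤ k) (hke : Even k)
    (hlb : 3 * (k - 1) ≤ n')
    (hub : (n' : ℤ) ≤ ((k : ℤ) - 1) ^ ρ - ((k : ℤ) ^ 2 / 2 - 3 * k + 2)) :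
    (∀ x y : Fin n', (cycleProcess k (SimpleGraph.pathGraph n') ρ).Adj x y ↔
      ¬ ((x : ℕ) % 2 = (y : ℕ) % 2)) ∧
    cycleStep k (cycleProcess k (SimpleGraph.pathGraph n') ρ) =
      cycleProcess k (SimpleGraph.pathGraph n') ρ := by
  obtain ⟨c, hcc⟩ := hke
  have hc : k = 2*c := by omega
  have hc2 : 2 ≤ c := by omega
  -- translate the integer bound to ℕ
  have hdivz : ((k:ℤ)^2/2) = 2*((c:ℤ)*(c:ℤ)) := by
    rw [show (k:ℤ) = 2*(c:ℤ) by exact_mod_cast hc,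
      show ((2:ℤ)*(c:ℤ))^2 = 2*(2*((c:ℤ)*(c:ℤ))) by ring,
      Int.mul_ediv_cancel_left _ (by norm_num)]
  rw [hdivz] at hub
  have hB : ((k:ℤ)-1)^ρ = (((k-1)^ρ : ℕ) : ℤ) := by
    rw [Nat.cast_pow, Nat.cast_sub (by omega : 1 ≤ k)]
    norm_num
  rw [hB] at hub
  have hcast : ((c*c : ℕ) : ℤ) = (c:ℤ)*(c:ℤ) := by push_cast; ring
  have hubN : n' + 2*(c*c) + 2 ≤ (k-1)^ρ + 6*c := by omega
  have hPodd : Odd ((k-1)^ρ) := CB.odd_pow_k hk ⟨c, hcc⟩ ρ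
  obtain ⟨pp, hpp⟩ := hPodd
  -- key frobenius bound
  obtain ⟨e, he⟩ : ∃ e, c = e + 2 := ⟨c - 2, by omega⟩
  have key : ∀ d : ℕ, d ≤ n' - 1 → Odd d → d + 2*((k/2 - 1)*(k/2 - 2)) ≤ (k-1)^ρ := by
    intro d hd hdodd
    obtain ⟨dd, hdd⟩ := hdodd
    have h1 : k/2 = c := by omega
    have h2 : (k/2 - 1)*(k/2 - 2) = (e+1)*e := by
      rw [h1, he, show e+2-1 = e+1 by omega, show e+2-2 = e by omega]
    have h3 : (e+1)*e = e*e + e := by ring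
    have h4 : c*c = e*e + 4*e + 4 := by rw [he]; ring
    omega
  -- the bipartite characterisation
  have main : ∀ u v : ℕ, u < v → v < n' → ¬(u % 2 = v % 2) → CB.adjN k n' ρ u v := by
    intro u v huv hv hpar
    have hdodd : Odd (v - u) := Nat.odd_iff.mpr (by omega)
    have hrep : CB.StepRep k ρ (v - u) :=
      CB.stepRep_frob hk ⟨c, hcc⟩ (by omega) hdodd (key (v - u) (by omega) hdodd)
    exact CB.claim_step (CB.claim_all hk ⟨c, hcc⟩ hlb ρ) huv hv hrep
  have hiff : ∀ x y : Fin n',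
      (cycleProcess k (SimpleGraph.pathGraph n') ρ).Adj x y ↔ ¬ ((x : ℕ) % 2 = (y : ℕ) % 2) := by
    intro x y
    constructor
    · exact CB.parity_adj hk ⟨c, hcc⟩ ρ x y
    · intro hxy
      have hbx := x.isLt
      have hby := y.isLt
      rcases Nat.lt_trichotomy (x:ℕ) (y:ℕ) with hlt | heq | hlt
      · obtain ⟨ha, hb, hadj⟩ := main (x:ℕ) (y:ℕ) hlt hby hxy
        have ex : (⟨(x:ℕ), ha⟩ : Fin n') = x := rfl
        have ey : (⟨(y:ℕ), hb⟩ : Fin n') = y := rfl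
        rwa [ex, ey] at hadj
      · omega
      · obtain ⟨ha, hb, hadj⟩ := main (y:ℕ) (x:ℕ) hlt hbx (fun hcon => hxy hcon.symm)
        have ex : (⟨(y:ℕ), ha⟩ : Fin n') = y := rfl
        have ey : (⟨(x:ℕ), hb⟩ : Fin n') = x := rfl
        rw [ex, ey] at hadj
        exact hadj.symm
  refine ⟨hiff, ?_⟩
  have hstab : ∀ x y : Fin n',
      (cycleStep k (cycleProcess k (SimpleGraph.pathGraph n') ρ)).Adj x y ↔
      (cycleProcess k (SimpleGraph.pathGraph n') ρ).Adj x y := by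
    intro x y
    constructor
    · rintro (h | ⟨hne, p, hp, hl⟩)
      · exact h
      · have hw := CB.parity_walk _ (CB.parity_adj hk ⟨c, hcc⟩ ρ) p
        rw [hl] at hw
        exact (hiff x y).mpr (by omega)
    · exact Or.inl
  exact SimpleGraph.ext (by funext x y; exact propext (hstab x y))
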